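/- Let f(x,y) = ⟨x,y⟩² + Σ_{α=1}^{p−1} ⟨E_α x, y⟩² on Sⁿ × Sⁿ as above. Then the Laplacian of f with respect to the product metric satisfies Δf = 4p − 4(n+1)f. -/

import Mathlib

open Matrix

/-- Second (Euclidean) derivative of `g` at `x` in directions `u`, `v`. -/
noncomputable def hessD {k : ℕ} (g : EuclideanSpace ℝ (Fin k) → ℝ)
    (x u v : EuclideanSpace ℝ (Fin k)) : ℝ :=
  fderiv ℝ (fun z => fderiv ℝ g z v) x u

/-- The Laplace–Beltrami operator of the unit sphere of dimension `ν` (sitting in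
`ℝ^{ν+1}`), expressed via the ambient Euclidean derivatives:
`Δ_S g = Δ g − Hess g(x,x) − ν ∂_x g` at a point `x` of the unit sphere. -/
noncomputable def sphLap {k : ℕ} (ν : ℕ) (g : EuclideanSpace ℝ (Fin k) → ℝ)
    (x : EuclideanSpace ℝ (Fin k)) : ℝ :=
  (∑ i : Fin k, hessD g x (EuclideanSpace.single i 1) (EuclideanSpace.single i 1))
    - hessD g x x x - (ν : ℝ) * fderiv ℝ g x x

/-- `f(x,y) = ⟨x,y⟩² + Σ_α ⟨E_α x, y⟩²`. -/
noncomputable def cliffF (n p : ℕ) (E : Fin (p - 1) → Matrix (Fin (n + 1)) (Fin (n + 1)) ℝ)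
    (x y : EuclideanSpace ℝ (Fin (n + 1))) : ℝ :=
  (inner ℝ x y : ℝ) ^ 2 +
    ∑ α : Fin (p - 1),
      (inner ℝ ((WithLp.equiv 2 (Fin (n + 1) → ℝ)).symm
        ((E α).mulVec (WithLp.equiv 2 (Fin (n + 1) → ℝ) x))) y : ℝ) ^ 2

lemma sphLap_sum_sq {k : ℕ} {ι : Type*} [Fintype ι]
    (L : ι → (EuclideanSpace ℝ (Fin k) →L[ℝ] ℝ)) (ν : ℕ)
    (x : EuclideanSpace ℝ (Fin k)) :
    sphLap ν (fun z => ∑ j, (L j z) ^ 2) x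
      = 2 * (∑ j, ∑ i : Fin k, (L j (EuclideanSpace.single i 1)) ^ 2)
        - 2 * ((ν : ℝ) + 1) * ∑ j, (L j x) ^ 2 := by
  set g : EuclideanSpace ℝ (Fin k) → ℝ := fun z => ∑ j, (L j z) ^ 2 with hg
  have hD : ∀ z, HasFDerivAt g
      (∑ j, (2 * L j z) • (L j : EuclideanSpace ℝ (Fin k) →L[ℝ] ℝ)) z := by
    intro z
    apply HasFDerivAt.fun_sum
    intro j _
    have h := ((L j).hasFDerivAt (x := z)).mul ((L j).hasFDerivAt (x := z))
    have heq : (2 * L j z) • (L j : EuclideanSpace ℝ (Fin k) →L[ℝ] ℝ)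
        = L j z • (L j : EuclideanSpace ℝ (Fin k) →L[ℝ] ℝ) + L j z • L j := by
      rw [two_mul, add_smul]
    rw [heq]
    simpa [sq, Pi.mul_def] using h
  have hfder : ∀ z v, fderiv ℝ g z v = ∑ j, 2 * L j z * L j v := by
    intro z v
    rw [(hD z).fderiv]
    simp [ContinuousLinearMap.sum_apply, smul_eq_mul]
  have hhess : ∀ u v, hessD g x u v = ∑ j, 2 * L j u * L j v := by
    intro u v
    have hfun : (fun z => fderiv ℝ g z v)
        = fun z => (∑ j, (2 * L j v) • (L j : EuclideanSpace ℝ (Fin k) →L[ℝ] ℝ)) z := by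
      funext z
      rw [hfder z v]
      simp only [ContinuousLinearMap.sum_apply, ContinuousLinearMap.smul_apply, smul_eq_mul]
      exact Finset.sum_congr rfl fun j _ => by ring
    unfold hessD
    rw [hfun, ContinuousLinearMap.fderiv]
    simp only [ContinuousLinearMap.sum_apply, ContinuousLinearMap.smul_apply, smul_eq_mul]
    exact Finset.sum_congr rfl fun j _ => by ring
  unfold sphLap
  simp only [hhess, hfder]
  have h2 : ∀ a : ℝ, 2 * a * a = 2 * a ^ 2 := fun a => by ring
  simp only [h2]
  rw [Finset.sum_comm (γ := ι)]
  simp only [← Finset.mul_sum]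
  ring

lemma dot_self_of_orth {k : ℕ} (B : Matrix (Fin k) (Fin k) ℝ) (hB : Bᵀ * B = 1)
    (u : Fin k → ℝ) : (B *ᵥ u) ⬝ᵥ (B *ᵥ u) = u ⬝ᵥ u := by
  rw [dotProduct_mulVec]
  have h : (B *ᵥ u) ᵥ* B = u := by
    rw [← Matrix.vecMul_transpose, Matrix.vecMul_vecMul, hB, Matrix.vecMul_one]
  rw [h]

lemma sum_coord_sq {k : ℕ} (c : EuclideanSpace ℝ (Fin k)) (hc : ‖c‖ = 1) :
    ∑ i : Fin k, c i * c i = 1 := by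
  have h := real_inner_self_eq_norm_sq c
  rw [hc, PiLp.inner_apply] at h
  simpa [sq] using h

/-- On `Sⁿ × Sⁿ`, the Laplacian of `f` in the product metric satisfies
`Δf = 4p − 4(n+1)f`. -/
theorem stmt_6 (n p : ℕ) (hp : 2 ≤ p)
    (E : Fin (p - 1) → Matrix (Fin (n + 1)) (Fin (n + 1)) ℝ)
    (hskew : ∀ α, (E α)ᵀ = -E α)
    (horth : ∀ α, E α * (E α)ᵀ = 1)
    (hcliff : ∀ α β, E α * E β + E β * E α =
      if α = β then (-2 : ℝ) • (1 : Matrix (Fin (n + 1)) (Fin (n + 1)) ℝ) else 0)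
    (x y : EuclideanSpace ℝ (Fin (n + 1))) (hx : ‖x‖ = 1) (hy : ‖y‖ = 1) :
    sphLap n (fun x' => cliffF n p E x' y) x + sphLap n (fun y' => cliffF n p E x y') y
      = 4 * (p : ℝ) - 4 * ((n : ℝ) + 1) * cliffF n p E x y := by
  classical
  set M : Option (Fin (p - 1)) → Matrix (Fin (n + 1)) (Fin (n + 1)) ℝ :=
    fun j => j.elim 1 E with hM
  have hMorth : ∀ j, M j * (M j)ᵀ = 1 := by
    rintro (_ | α)
    · simp [hM]
    · simpa [hM] using horth α
  set Lx : Option (Fin (p - 1)) → (EuclideanSpace ℝ (Fin (n + 1)) →L[ℝ] ℝ) :=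
    fun j => (innerSL ℝ y).comp
      (LinearMap.toContinuousLinearMap (Matrix.toEuclideanLin (M j))) with hLx
  set c : Option (Fin (p - 1)) → EuclideanSpace ℝ (Fin (n + 1)) :=
    fun j => Matrix.toEuclideanLin (M j) x with hc
  set Ly : Option (Fin (p - 1)) → (EuclideanSpace ℝ (Fin (n + 1)) →L[ℝ] ℝ) :=
    fun j => innerSL ℝ (c j) with hLy
  have hLxval : ∀ j x', Lx j x'
      = (inner ℝ ((WithLp.equiv 2 (Fin (n + 1) → ℝ)).symm
          ((M j).mulVec (WithLp.equiv 2 (Fin (n + 1) → ℝ) x'))) y : ℝ) := by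
    intro j x'
    simp only [hLx, ContinuousLinearMap.comp_apply, LinearMap.coe_toContinuousLinearMap',
      innerSL_apply_apply, Matrix.toEuclideanLin_apply]
    exact real_inner_comm _ _
  have hgx : (fun x' => cliffF n p E x' y) = fun x' => ∑ j, (Lx j x') ^ 2 := by
    funext x'
    rw [Fintype.sum_option]
    have h0 : Lx none x' = (inner ℝ x' y : ℝ) := by
      rw [hLxval]
      simp [hM, Matrix.one_mulVec]
    unfold cliffF
    rw [h0]
    congr 1
    exact Finset.sum_congr rfl fun α _ => by rw [hLxval]; simp [hM]
  have hgy : (fun y' => cliffF n p E x y') = fun y' => ∑ j, (Ly j y') ^ 2 := by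
    funext y'
    rw [Fintype.sum_option]
    have h0 : Ly none y' = (inner ℝ x y' : ℝ) := by
      simp only [hLy, innerSL_apply_apply]
      congr 1
      simp [hc, hM, Matrix.toEuclideanLin_apply, Matrix.one_mulVec]
    unfold cliffF
    rw [h0]
    congr 1
  have hfx : ∑ j, (Lx j x) ^ 2 = cliffF n p E x y := (congrFun hgx x).symm
  have hfy : ∑ j, (Ly j y) ^ 2 = cliffF n p E x y := (congrFun hgy y).symm
  have hsumx : ∀ j, ∑ i : Fin (n + 1), (Lx j (EuclideanSpace.single i 1)) ^ 2 = 1 := by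
    intro j
    have hval : ∀ i : Fin (n + 1), Lx j (EuclideanSpace.single i 1)
        = ((M j)ᵀ *ᵥ (fun m => y m)) i := by
      intro i
      rw [hLxval]
      simp only [WithLp.equiv_apply, EuclideanSpace.ofLp_single, Matrix.mulVec_single, PiLp.inner_apply,
        WithLp.equiv_symm_apply, PiLp.toLp_apply, RCLike.inner_apply, conj_trivial]
      rw [Matrix.mulVec, dotProduct]
      refine Finset.sum_congr rfl fun m _ => ?_
      simp [Matrix.transpose_apply, mul_comm]
    simp only [hval]
    have hd : ((M j)ᵀ *ᵥ fun m => y m) ⬝ᵥ ((M j)ᵀ *ᵥ fun m => y m)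
        = (fun m => y m) ⬝ᵥ (fun m => y m) := by
      refine dot_self_of_orth _ ?_ _
      rw [Matrix.transpose_transpose]
      exact hMorth j
    rw [dotProduct, dotProduct] at hd
    calc ∑ i : Fin (n + 1), ((M j)ᵀ *ᵥ fun m => y m) i ^ 2
        = ∑ i : Fin (n + 1), ((M j)ᵀ *ᵥ fun m => y m) i * ((M j)ᵀ *ᵥ fun m => y m) i := by
          refine Finset.sum_congr rfl fun i _ => by ring
      _ = ∑ m : Fin (n + 1), y m * y m := hd
      _ = 1 := sum_coord_sq y hy
  have hsumy : ∀ j, ∑ i : Fin (n + 1), (Ly j (EuclideanSpace.single i 1)) ^ 2 = 1 := by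
    intro j
    have hval : ∀ i : Fin (n + 1), Ly j (EuclideanSpace.single i 1) = c j i := by
      intro i
      simp [hLy, EuclideanSpace.inner_single_right]
    simp only [hval]
    have hcval : ∀ i, c j i = ((M j) *ᵥ (fun m => x m)) i := by
      intro i
      simp only [hc, Matrix.toEuclideanLin_apply, WithLp.equiv_symm_apply, PiLp.toLp_apply]
    simp only [hcval]
    have hd : ((M j) *ᵥ fun m => x m) ⬝ᵥ ((M j) *ᵥ fun m => x m)
        = (fun m => x m) ⬝ᵥ (fun m => x m) := by
      exact dot_self_of_orth _ (mul_eq_one_comm.mp (hMorth j)) _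
    rw [dotProduct, dotProduct] at hd
    calc ∑ i : Fin (n + 1), ((M j) *ᵥ fun m => x m) i ^ 2
        = ∑ i : Fin (n + 1), ((M j) *ᵥ fun m => x m) i * ((M j) *ᵥ fun m => x m) i := by
          refine Finset.sum_congr rfl fun i _ => by ring
      _ = ∑ m : Fin (n + 1), x m * x m := hd
      _ = 1 := sum_coord_sq x hx
  have h1 : p - 1 + 1 = p := by omega
  have hcard : ((Fintype.card (Option (Fin (p - 1)))) : ℝ) = (p : ℝ) := by
    simp only [Fintype.card_option, Fintype.card_fin, h1]
  rw [hgx, hgy, sphLap_sum_sq Lx n x, sphLap_sum_sq Ly n y, hfx, hfy]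
  simp only [hsumx, hsumy, Finset.sum_const, Finset.card_univ, nsmul_eq_mul, mul_one]
  rw [hcard]
  ring
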